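/- Weak duality for the finite-dimensional linear-quadratic problem: if Q, R, π are symmetric positive semidefinite (with Q, R positive definite where inverses are used), then for any feasible primal pair (z, u) satisfying ż = Az + bu with z(0) = z₀, and any feasible dual pair (γ, ρ) satisfying γ̇ = −Aᵀγ + ρ on [0,1], the dual objective J_D(ρ, γ) = (1/2)∫₀¹(−ρᵀQ⁻¹ρ − γᵀbR⁻¹bᵀγ)dt − γ(0)ᵀz₀ − (1/2)γ(1)ᵀπ⁻¹γ(1) is at most the primal objective J_P(z, u) = (1/2)∫₀¹(zᵀQz + uᵀRu)dt + (1/2)z(1)ᵀπ z(1). -/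

import Mathlib

/-!
Along a primal and a dual trajectory the pairing `γ ⬝ᵥ z` has derivative
`ρ ⬝ᵥ z + γ ⬝ᵥ (b *ᵥ u)`: the two `A`-terms cancel. Completing squares with `Q` and `R` bounds twice
this derivative by the sum of the primal and the (negated) dual running costs, and completing the
square with `π` bounds `-2 γ(1) ⬝ᵥ z(1)` by the sum of the terminal costs. Integrating over `[0, 1]`
and adding the terminal estimate gives `J_D ≤ J_P`.
-/

open Matrix

section ContinuousOn

variable {X R ι κ : Type*} [TopologicalSpace X] [TopologicalSpace R] [Fintype ι]
  {s : Set X}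

theorem ContinuousOn.dotProduct [Mul R] [AddCommMonoid R] [ContinuousAdd R] [ContinuousMul R]
    {v w : X → ι → R} (hv : ContinuousOn v s) (hw : ContinuousOn w s) :
    ContinuousOn (fun x => v x ⬝ᵥ w x) s :=
  (continuous_fst.dotProduct continuous_snd).comp_continuousOn (hv.prodMk hw)

theorem ContinuousOn.matrix_mulVec [NonUnitalNonAssocSemiring R] [ContinuousAdd R]
    [ContinuousMul R] {M : X → Matrix κ ι R} {w : X → ι → R} (hM : ContinuousOn M s)
    (hw : ContinuousOn w s) : ContinuousOn (fun x => M x *ᵥ w x) s :=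
  (continuous_fst.matrix_mulVec continuous_snd).comp_continuousOn (hM.prodMk hw)

end ContinuousOn

theorem Continuous.matrix_inv {X 𝕜 ι : Type*} [TopologicalSpace X] [Field 𝕜]
    [TopologicalSpace 𝕜] [IsTopologicalDivisionRing 𝕜] [Fintype ι] [DecidableEq ι]
    {M : X → Matrix ι ι 𝕜} (hM : Continuous M) (hdet : ∀ x, (M x).det ≠ 0) :
    Continuous fun x => (M x)⁻¹ := by
  simp only [inv_def, Ring.inverse_eq_inv']
  exact (hM.matrix_det.inv₀ hdet).smul hM.matrix_adjugate

theorem HasDerivAt.dotProduct {𝕜 ι : Type*} [NontriviallyNormedField 𝕜] [Fintype ι]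
    {v w : 𝕜 → ι → 𝕜} {v' w' : ι → 𝕜} {t : 𝕜}
    (hv : HasDerivAt v v' t) (hw : HasDerivAt w w' t) :
    HasDerivAt (fun t => v t ⬝ᵥ w t) (v' ⬝ᵥ w t + v t ⬝ᵥ w') t := by
  simp only [_root_.dotProduct, ← Finset.sum_add_distrib]
  exact HasDerivAt.fun_sum fun i _ => (hasDerivAt_pi.mp hv i).mul (hasDerivAt_pi.mp hw i)

theorem Matrix.PosDef.two_mul_dotProduct_le {ι : Type*} [Fintype ι] [DecidableEq ι]
    {M : Matrix ι ι ℝ} (hM : M.PosDef) (v w : ι → ℝ) :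
    2 * (w ⬝ᵥ v) ≤ v ⬝ᵥ (M *ᵥ v) + w ⬝ᵥ (M⁻¹ *ᵥ w) := by
  have hMw : M *ᵥ (M⁻¹ *ᵥ w) = w := by
    rw [mulVec_mulVec, mul_nonsing_inv _ (isUnit_iff_ne_zero.mpr hM.det_pos.ne'), one_mulVec]
  have hcross : (M⁻¹ *ᵥ w) ⬝ᵥ (M *ᵥ v) = w ⬝ᵥ v := by
    rw [dotProduct_mulVec, ← mulVec_transpose, show Mᵀ = M from hM.isHermitian, hMw]
  have hsq := hM.posSemidef.dotProduct_mulVec_nonneg (v - M⁻¹ *ᵥ w)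
  simp only [star_trivial, mulVec_sub, dotProduct_sub, sub_dotProduct, hMw, hcross] at hsq
  rw [dotProduct_comm v w, dotProduct_comm (M⁻¹ *ᵥ w) w] at hsq
  linarith

theorem hasDerivAt_dotProduct_of_adjoint {𝕜 ι κ : Type*} [NontriviallyNormedField 𝕜]
    [Fintype ι] [Fintype κ] {A : Matrix ι ι 𝕜} {B : Matrix ι κ 𝕜} {z γ : 𝕜 → ι → 𝕜}
    {u : κ → 𝕜} {ρ : ι → 𝕜} {t : 𝕜} (hz : HasDerivAt z (A *ᵥ z t + B *ᵥ u) t)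
    (hγ : HasDerivAt γ (-(Aᵀ *ᵥ γ t) + ρ) t) :
    HasDerivAt (fun s => γ s ⬝ᵥ z s) (ρ ⬝ᵥ z t + γ t ⬝ᵥ (B *ᵥ u)) t := by
  convert hγ.dotProduct hz using 1
  rw [add_dotProduct, neg_dotProduct, dotProduct_add, mulVec_transpose, ← dotProduct_mulVec]
  ring

theorem neg_dual_add_two_mul_pairing_le_primal {ι κ : Type*} [Fintype ι] [DecidableEq ι]
    [Fintype κ] [DecidableEq κ] {Q : Matrix ι ι ℝ} {R : Matrix κ κ ℝ} (hQ : Q.PosDef)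
    (hR : R.PosDef) (B : Matrix ι κ ℝ) (z ρ γ : ι → ℝ) (u : κ → ℝ) :
    -(ρ ⬝ᵥ (Q⁻¹ *ᵥ ρ)) - γ ⬝ᵥ ((B * R⁻¹ * Bᵀ) *ᵥ γ) + 2 * (ρ ⬝ᵥ z + γ ⬝ᵥ (B *ᵥ u))
      ≤ z ⬝ᵥ (Q *ᵥ z) + u ⬝ᵥ (R *ᵥ u) := by
  have hγB : γ ⬝ᵥ (B *ᵥ u) = (Bᵀ *ᵥ γ) ⬝ᵥ u := by
    rw [mulVec_transpose, ← dotProduct_mulVec]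
  have hγBRB : γ ⬝ᵥ ((B * R⁻¹ * Bᵀ) *ᵥ γ) = (Bᵀ *ᵥ γ) ⬝ᵥ (R⁻¹ *ᵥ (Bᵀ *ᵥ γ)) := by
    rw [← mulVec_mulVec, ← mulVec_mulVec, mulVec_transpose, ← dotProduct_mulVec]
  have hstate := hQ.two_mul_dotProduct_le z ρ
  have hcontrol := hR.two_mul_dotProduct_le u (Bᵀ *ᵥ γ)
  rw [hγB, hγBRB]
  linarith

section Integral

open Set MeasureTheory

variable {ι κ : Type*} [Fintype ι] [Fintype κ] {B : ℝ → Matrix ι κ ℝ} {z γ ρ : ℝ → ι → ℝ}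
  {u : ℝ → κ → ℝ} {a b : ℝ}

theorem integral_pairing_eq_sub_of_adjoint {A : ℝ → Matrix ι ι ℝ} (hab : a ≤ b)
    (hz : ∀ t ∈ Icc a b, HasDerivAt z (A t *ᵥ z t + B t *ᵥ u t) t)
    (hγ : ∀ t ∈ Icc a b, HasDerivAt γ (-((A t)ᵀ *ᵥ γ t) + ρ t) t) (hB : Continuous B)
    (hρ : ContinuousOn ρ (Icc a b)) (hu : ContinuousOn u (Icc a b)) :
    ∫ t in a..b, (ρ t ⬝ᵥ z t + γ t ⬝ᵥ (B t *ᵥ u t)) = γ b ⬝ᵥ z b - γ a ⬝ᵥ z a := by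
  have hz_cont : ContinuousOn z (Icc a b) :=
    continuousOn_of_forall_continuousAt fun t ht => (hz t ht).continuousAt
  have hγ_cont : ContinuousOn γ (Icc a b) :=
    continuousOn_of_forall_continuousAt fun t ht => (hγ t ht).continuousAt
  refine intervalIntegral.integral_eq_sub_of_hasDerivAt (f := fun t => γ t ⬝ᵥ z t)
    (fun t ht => ?_) (((hρ.dotProduct hz_cont).add
      (hγ_cont.dotProduct (hB.continuousOn.matrix_mulVec hu))).intervalIntegrable_of_Icc hab)
  rw [uIcc_of_le hab] at ht
  exact hasDerivAt_dotProduct_of_adjoint (hz t ht) (hγ t ht)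

variable [DecidableEq ι] [DecidableEq κ]

theorem integral_neg_dual_add_two_mul_integral_pairing_le {Q : ℝ → Matrix ι ι ℝ}
    {R : ℝ → Matrix κ κ ℝ} (hab : a ≤ b) (hQ : Continuous Q) (hR : Continuous R)
    (hB : Continuous B) (hQpd : ∀ t, (Q t).PosDef) (hRpd : ∀ t, (R t).PosDef)
    (hz : ContinuousOn z (Icc a b)) (hγ : ContinuousOn γ (Icc a b))
    (hρ : ContinuousOn ρ (Icc a b)) (hu : ContinuousOn u (Icc a b)) :
    (∫ t in a..b, (-(ρ t ⬝ᵥ ((Q t)⁻¹ *ᵥ ρ t)) - γ t ⬝ᵥ ((B t * (R t)⁻¹ * (B t)ᵀ) *ᵥ γ t)))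
        + 2 * ∫ t in a..b, (ρ t ⬝ᵥ z t + γ t ⬝ᵥ (B t *ᵥ u t))
      ≤ ∫ t in a..b, (z t ⬝ᵥ (Q t *ᵥ z t) + u t ⬝ᵥ (R t *ᵥ u t)) := by
  have hQinv := hQ.matrix_inv fun t => (hQpd t).det_pos.ne'
  have hgain : Continuous fun t => B t * (R t)⁻¹ * (B t)ᵀ :=
    (hB.matrix_mul (hR.matrix_inv fun t => (hRpd t).det_pos.ne')).matrix_mul hB.matrix_transpose
  have hdual : IntervalIntegrable (fun t => -(ρ t ⬝ᵥ ((Q t)⁻¹ *ᵥ ρ t))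
      - γ t ⬝ᵥ ((B t * (R t)⁻¹ * (B t)ᵀ) *ᵥ γ t)) volume a b :=
    ((hρ.dotProduct (hQinv.continuousOn.matrix_mulVec hρ)).neg.sub
      (hγ.dotProduct (hgain.continuousOn.matrix_mulVec hγ))).intervalIntegrable_of_Icc hab
  have hpairing : IntervalIntegrable
      (fun t => ρ t ⬝ᵥ z t + γ t ⬝ᵥ (B t *ᵥ u t)) volume a b :=
    ((hρ.dotProduct hz).add
      (hγ.dotProduct (hB.continuousOn.matrix_mulVec hu))).intervalIntegrable_of_Icc hab
  have hprimal : IntervalIntegrable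
      (fun t => z t ⬝ᵥ (Q t *ᵥ z t) + u t ⬝ᵥ (R t *ᵥ u t)) volume a b :=
    ((hz.dotProduct (hQ.continuousOn.matrix_mulVec hz)).add
      (hu.dotProduct (hR.continuousOn.matrix_mulVec hu))).intervalIntegrable_of_Icc hab
  rw [← intervalIntegral.integral_const_mul,
    ← intervalIntegral.integral_add hdual (hpairing.const_mul 2)]
  exact intervalIntegral.integral_mono_on hab (hdual.add (hpairing.const_mul 2)) hprimal
    fun t _ =>
      neg_dual_add_two_mul_pairing_le_primal (hQpd t) (hRpd t) (B t) (z t) (ρ t) (γ t) (u t)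

end Integral

theorem stmt_3_general {n k : ℕ}
    (A : ℝ → Matrix (Fin n) (Fin n) ℝ) (b : ℝ → Matrix (Fin n) (Fin k) ℝ)
    (Q : ℝ → Matrix (Fin n) (Fin n) ℝ) (R : ℝ → Matrix (Fin k) (Fin k) ℝ)
    (π : Matrix (Fin n) (Fin n) ℝ)
    (hb : Continuous b) (hQ : Continuous Q) (hR : Continuous R)
    (hQpd : ∀ t, (Q t).PosDef) (hRpd : ∀ t, (R t).PosDef) (hπ : π.PosDef)
    (z γ ρ : ℝ → Fin n → ℝ) (u : ℝ → Fin k → ℝ)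
    (hu : Continuous u) (hρ : Continuous ρ)
    (z₀ : Fin n → ℝ) (hz0 : z 0 = z₀)
    (hzode : ∀ t ∈ Set.Icc (0:ℝ) 1, HasDerivAt z (A t *ᵥ z t + b t *ᵥ u t) t)
    (hγode : ∀ t ∈ Set.Icc (0:ℝ) 1, HasDerivAt γ (-((A t)ᵀ *ᵥ γ t) + ρ t) t) :
    (1/2) * (∫ t in (0:ℝ)..1,
        (-(ρ t ⬝ᵥ ((Q t)⁻¹ *ᵥ ρ t)) - γ t ⬝ᵥ ((b t * (R t)⁻¹ * (b t)ᵀ) *ᵥ γ t)))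
      - γ 0 ⬝ᵥ z₀ - (1/2) * (γ 1 ⬝ᵥ (π⁻¹ *ᵥ γ 1))
    ≤ (1/2) * (∫ t in (0:ℝ)..1, (z t ⬝ᵥ (Q t *ᵥ z t) + u t ⬝ᵥ (R t *ᵥ u t)))
      + (1/2) * (z 1 ⬝ᵥ (π *ᵥ z 1)) := by
  have hz : ContinuousOn z (Set.Icc 0 1) :=
    continuousOn_of_forall_continuousAt fun t ht => (hzode t ht).continuousAt
  have hγ : ContinuousOn γ (Set.Icc 0 1) :=
    continuousOn_of_forall_continuousAt fun t ht => (hγode t ht).continuousAt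
  have hpairing := integral_pairing_eq_sub_of_adjoint zero_le_one hzode hγode hb
    hρ.continuousOn hu.continuousOn
  have hrunning := integral_neg_dual_add_two_mul_integral_pairing_le zero_le_one hQ hR hb
    hQpd hRpd hz hγ hρ.continuousOn hu.continuousOn
  have hterminal := hπ.two_mul_dotProduct_le (z 1) (-γ 1)
  simp only [neg_dotProduct, mulVec_neg, dotProduct_neg, neg_neg] at hterminal
  subst hz0
  linarith

/-- Weak duality for the finite-dimensional linear-quadratic problem. -/
theorem stmt_3 {n k : ℕ}
    (A : ℝ → Matrix (Fin n) (Fin n) ℝ) (b : ℝ → Matrix (Fin n) (Fin k) ℝ)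
    (Q : ℝ → Matrix (Fin n) (Fin n) ℝ) (R : ℝ → Matrix (Fin k) (Fin k) ℝ)
    (π : Matrix (Fin n) (Fin n) ℝ)
    (hA : Continuous A) (hb : Continuous b) (hQ : Continuous Q) (hR : Continuous R)
    (hQpd : ∀ t, (Q t).PosDef) (hRpd : ∀ t, (R t).PosDef) (hπ : π.PosDef)
    (z γ ρ : ℝ → Fin n → ℝ) (u : ℝ → Fin k → ℝ)
    (hu : Continuous u) (hρ : Continuous ρ) (hzc : Continuous z) (hγc : Continuous γ)
    (z₀ : Fin n → ℝ) (hz0 : z 0 = z₀)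
    (hzode : ∀ t ∈ Set.Icc (0:ℝ) 1, HasDerivAt z (A t *ᵥ z t + b t *ᵥ u t) t)
    (hγode : ∀ t ∈ Set.Icc (0:ℝ) 1, HasDerivAt γ (-((A t)ᵀ *ᵥ γ t) + ρ t) t) :
    (1/2) * (∫ t in (0:ℝ)..1,
        (-(ρ t ⬝ᵥ ((Q t)⁻¹ *ᵥ ρ t)) - γ t ⬝ᵥ ((b t * (R t)⁻¹ * (b t)ᵀ) *ᵥ γ t)))
      - γ 0 ⬝ᵥ z₀ - (1/2) * (γ 1 ⬝ᵥ (π⁻¹ *ᵥ γ 1))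
    ≤ (1/2) * (∫ t in (0:ℝ)..1, (z t ⬝ᵥ (Q t *ᵥ z t) + u t ⬝ᵥ (R t *ᵥ u t)))
      + (1/2) * (z 1 ⬝ᵥ (π *ᵥ z 1)) :=
  stmt_3_general A b Q R π hb hQ hR hQpd hRpd hπ z γ ρ u hu hρ z₀ hz0 hzode hγode
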